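/- Let H_1,...,H_N and H be real Hilbert spaces, and for each i let L_i : H_i → H be a bounded linear operator with ‖L_i w‖_H ≤ C‖w‖_{H_i}. Let ρ_1,...,ρ_N be bounded linear self-adjoint operators on H (multiplication operators) with operator norms ‖ρ_i‖. Define A on 𝓗 = ∏ H_i by (Aw)_i = w_i + α L_i*(ρ_i² ∑_j L_j w_j) for a constant α > 0. If β₀ := C² α (max_{i,j} ‖ρ_i − ρ_j‖)(max_i ‖ρ_i‖) N² < 1, then ⟨Aw, w⟩_𝓗 ≥ (1 − β₀)‖w‖_𝓗² for all w ∈ 𝓗, so A is coercive. -/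
import Mathlib

open scoped RealInnerProductSpace
open Finset

/-- coercivity of the Nash-equilibrium operator A. -/
theorem stmt_0 {N : ℕ} (hN : 0 < N)
    (Hi : Fin N → Type*) [∀ i, NormedAddCommGroup (Hi i)]
    [∀ i, InnerProductSpace ℝ (Hi i)] [∀ i, CompleteSpace (Hi i)]
    {H : Type*} [NormedAddCommGroup H] [InnerProductSpace ℝ H] [CompleteSpace H]
    (L : ∀ i, Hi i →L[ℝ] H) (C : ℝ) (hL : ∀ i (w : Hi i), ‖L i w‖ ≤ C * ‖w‖)
    (ρ : Fin N → H →L[ℝ] H) (hρ : ∀ i, IsSelfAdjoint (ρ i))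
    (hcomm : ∀ i j, Commute (ρ i) (ρ j))
    (α : ℝ) (hα : 0 < α)
    (M R : ℝ) (hM : ∀ i j, ‖ρ i - ρ j‖ ≤ M) (hR : ∀ i, ‖ρ i‖ ≤ R)
    (β₀ : ℝ) (hβ₀ : β₀ = C ^ 2 * α * M * R * (N : ℝ) ^ 2) (hβ₀lt : β₀ < 1)
    (A : (∀ i, Hi i) → ∀ i, Hi i)
    (hA : ∀ (w : ∀ i, Hi i) i,
      A w i = w i + α • (L i).adjoint ((ρ i) ((ρ i) (∑ j, L j (w j)))))
    (w : ∀ i, Hi i) :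
    (1 - β₀) * ∑ i, ‖w i‖ ^ 2 ≤ ∑ i, ⟪A w i, w i⟫ := by
  set S : H := ∑ j, L j (w j) with hS
  set u : Fin N → H := fun i => ρ i (L i (w i)) with hu
  have hCw : ∀ i, (0:ℝ) ≤ C * ‖w i‖ := fun i => (norm_nonneg _).trans (hL i (w i))
  have i0 : Fin N := ⟨0, hN⟩
  have hM0 : (0:ℝ) ≤ M := (norm_nonneg _).trans (hM i0 i0)
  have hR0 : (0:ℝ) ≤ R := (norm_nonneg _).trans (hR i0)
  have hN1 : (1:ℝ) ≤ (N:ℝ) := by exact_mod_cast hN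
  have key : ∀ i, ⟪A w i, w i⟫ = ‖w i‖ ^ 2 + α * ⟪ρ i S, u i⟫ := by
    intro i
    rw [hA, inner_add_left, real_inner_self_eq_norm_sq, real_inner_smul_left,
        ContinuousLinearMap.adjoint_inner_left, ← hS]
    have hsym := (ContinuousLinearMap.isSelfAdjoint_iff_isSymmetric.mp (hρ i)) (ρ i S) (L i (w i))
    simp only [ContinuousLinearMap.coe_coe] at hsym
    rw [hsym]
  have expand : ∀ i, ⟪ρ i S, u i⟫
      = ∑ j, ⟪u j, u i⟫ + ∑ j, ⟪(ρ i - ρ j) (L j (w j)), u i⟫ := by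
    intro i
    have h : ρ i S = ∑ j, (u j + (ρ i - ρ j) (L j (w j))) := by
      rw [hS, map_sum]
      refine Finset.sum_congr rfl fun j _ => ?_
      simp [hu, ContinuousLinearMap.sub_apply]
    rw [h, sum_inner, ← Finset.sum_add_distrib]
    exact Finset.sum_congr rfl fun j _ => inner_add_left _ _ _
  have hQ : (0:ℝ) ≤ ∑ i, ∑ j, ⟪u j, u i⟫ := by
    have h : ⟪∑ j, u j, ∑ i, u i⟫ = ∑ i, ∑ j, ⟪u j, u i⟫ := by
      rw [inner_sum]
      exact Finset.sum_congr rfl fun i _ => sum_inner _ _ _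
    rw [← h]
    exact real_inner_self_nonneg
  have err : ∀ i j, -(C^2 * M * R * (‖w j‖ * ‖w i‖)) ≤ ⟪(ρ i - ρ j) (L j (w j)), u i⟫ := by
    intro i j
    have h1 : ‖(ρ i - ρ j) (L j (w j))‖ ≤ M * (C * ‖w j‖) :=
      (ContinuousLinearMap.le_opNorm _ _).trans
        (mul_le_mul (hM i j) (hL j (w j)) (norm_nonneg _) hM0)
    have h2 : ‖u i‖ ≤ R * (C * ‖w i‖) :=
      (ContinuousLinearMap.le_opNorm _ _).trans
        (mul_le_mul (hR i) (hL i (w i)) (norm_nonneg _) hR0)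
    have habs : |⟪(ρ i - ρ j) (L j (w j)), u i⟫| ≤ (M * (C * ‖w j‖)) * (R * (C * ‖w i‖)) :=
      (abs_real_inner_le_norm _ _).trans
        (mul_le_mul h1 h2 (norm_nonneg _) (mul_nonneg hM0 (hCw j)))
    nlinarith [neg_abs_le ⟪(ρ i - ρ j) (L j (w j)), u i⟫]
  -- bound the error sum
  set T : ℝ := ∑ i, ‖w i‖ ^ 2 with hT
  have hT0 : 0 ≤ T := Finset.sum_nonneg fun i _ => sq_nonneg _
  set E : ℝ := ∑ i, ∑ j, ⟪(ρ i - ρ j) (L j (w j)), u i⟫ with hEdef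
  set c : ℝ := C^2 * M * R with hc
  have hc0 : 0 ≤ c := by positivity
  have hE : ∑ i, ∑ j, (-(c * (‖w j‖ * ‖w i‖))) ≤ E :=
    Finset.sum_le_sum fun i _ => Finset.sum_le_sum fun j _ => err i j
  have hsum : ∑ i, ∑ j, (-(c * (‖w j‖ * ‖w i‖))) = (-c) * ∑ i, ∑ j, ‖w j‖ * ‖w i‖ := by
    simp_rw [← neg_mul, ← Finset.mul_sum]
  have hP : ∑ i, ∑ j, ‖w j‖ * ‖w i‖ ≤ (N:ℝ) * T := by
    calc ∑ i, ∑ j, ‖w j‖ * ‖w i‖ ≤ ∑ i : Fin N, ∑ j : Fin N, (‖w j‖^2 + ‖w i‖^2)/2 :=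
        Finset.sum_le_sum fun i _ => Finset.sum_le_sum fun j _ => by
          nlinarith [sq_nonneg (‖w j‖ - ‖w i‖)]
      _ = (N:ℝ) * T := by
        have h1 : ∀ i : Fin N, ∑ j : Fin N, (‖w j‖^2 + ‖w i‖^2)/2
            = (T + (N:ℝ) * ‖w i‖^2)/2 := by
          intro i
          rw [← Finset.sum_div, Finset.sum_add_distrib, Finset.sum_const, card_univ,
            Fintype.card_fin, nsmul_eq_mul, hT]
        simp_rw [h1]
        rw [← Finset.sum_div, Finset.sum_add_distrib, Finset.sum_const, card_univ,
          Fintype.card_fin, nsmul_eq_mul, ← Finset.mul_sum, ← hT]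
        ring
  have hEge : (-c) * ((N:ℝ) * T) ≤ E := by
    refine le_trans ?_ (hsum ▸ hE)
    nlinarith
  have total : ∑ i, ⟪A w i, w i⟫
      = T + α * ((∑ i, ∑ j, ⟪u j, u i⟫) + E) := by
    simp_rw [key, expand]
    rw [Finset.sum_add_distrib, ← Finset.mul_sum, Finset.sum_add_distrib]
  rw [total, hβ₀]
  have h1 : α * (-c * ((N:ℝ) * T)) ≤ α * E := mul_le_mul_of_nonneg_left hEge hα.le
  have h2 : 0 ≤ α * ∑ i, ∑ j, ⟪u j, u i⟫ := mul_nonneg hα.le hQ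
  have h3 : (0:ℝ) ≤ α * c * T * ((N:ℝ) - 1) * (N:ℝ) :=
    mul_nonneg (mul_nonneg (mul_nonneg (mul_nonneg hα.le hc0) hT0)
      (sub_nonneg.mpr hN1)) (zero_le_one.trans hN1)
  have hβc : C ^ 2 * α * M * R * (N:ℝ) ^ 2 = α * c * (N:ℝ)^2 := by rw [hc]; ring
  rw [hβc]
  nlinarith [h1, h2, h3]
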